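/- Let (G,σ) be a binary-explainable BMG with vertex set L and binary-refinable tree (T,σ). Then every tree on leaf set L that displays all triples of R^bin(G,σ) is a refinement of (T,σ). In particular, every binary tree that explains (G,σ) is a refinement of (T,σ). -/

import Mathlib

/-!
The Aho tree is built top-down: each cluster is a connected component `C` of an Aho graph
`[R^bin, L]` on a previously built cluster `L`. By induction it suffices that `C` is a cluster
of a tree `T'` displaying `R^bin` once `L` is. As the clusters of `T'` containing a fixed leaf
form a chain, this holds as soon as `lca_T'(p, q) ⊆ C` for each edge `pq` of `C`, given by a
triple `pq|w` in `R^bin`. For `z` in `lca_T'(p, q)`, the triples of `R^bin` built from `z`, a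
best match of `z` and `p, q, w` either connect `z` to `p` in the Aho graph or cannot all be
displayed by `T'` together with `pq|w`. Binary trees explaining `(G, σ)` display `R^bin`, which
gives the second claim.
-/

/-- A rooted phylogenetic tree with leaf set `V`, encoded by its hierarchy of clusters
(the cluster of a vertex is the set of leaves below it; inner vertices of a phylogenetic
tree have at least two children, so vertices correspond bijectively to clusters). -/
structure PhyloTree (V : Type*) where
  clusters : Set (Set V)
  nonempty_of_mem : ∀ A ∈ clusters, A.Nonempty
  univ_mem : Set.univ ∈ clusters
  singleton_mem : ∀ v : V, {v} ∈ clusters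
  nested : ∀ A ∈ clusters, ∀ B ∈ clusters, A ⊆ B ∨ B ⊆ A ∨ Disjoint A B

namespace PhyloTree

variable {V : Type*}

/-- The cluster of the last common ancestor of `x` and `y`: the smallest cluster
containing both (the clusters containing `x` and `y` form a chain, so their
intersection is the smallest one). -/
def lca (T : PhyloTree V) (x y : V) : Set V :=
  ⋂₀ {A | A ∈ T.clusters ∧ x ∈ A ∧ y ∈ A}

/-- The rooted triple `xy|z` (on three pairwise distinct leaves) is displayed by `T`:
`lca(x,y) ≺ lca(x,z) = lca(y,z)`. -/
def Displays (T : PhyloTree V) (x y z : V) : Prop :=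
  x ≠ y ∧ x ≠ z ∧ y ≠ z ∧ T.lca x y ⊂ T.lca x z ∧ T.lca x z = T.lca y z

/-- `T` displays every triple of `R`; a triple `(x, y, z)` encodes `xy|z`. -/
def DisplaysSet (T : PhyloTree V) (R : Set (V × V × V)) : Prop :=
  ∀ t ∈ R, T.Displays t.1 t.2.1 t.2.2

/-- `r(T)`, the set of triples displayed by `T`. -/
def triples (T : PhyloTree V) : Set (V × V × V) :=
  {t | T.Displays t.1 t.2.1 t.2.2}

/-- `T` is binary: every inner vertex (cluster with at least two leaves) has exactly
two children, i.e. splits into two disjoint proper subclusters. -/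
def IsBinary (T : PhyloTree V) : Prop :=
  ∀ A ∈ T.clusters, 1 < A.ncard →
    ∃ B ∈ T.clusters, ∃ D ∈ T.clusters,
      Disjoint B D ∧ B ∪ D = A ∧ B ⊂ A ∧ D ⊂ A

/-- `T'` is a refinement of `T`: they have the same leaf set and `T` is obtained from
`T'` by contracting inner edges, i.e. every cluster of `T` is a cluster of `T'`. -/
def Refines (T' T : PhyloTree V) : Prop :=
  T.clusters ⊆ T'.clusters

end PhyloTree

section BMG

variable {V C : Type*}

/-- `y` is a best match of `x` in the leaf-colored tree `(T,σ)`. -/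
def bestMatch (T : PhyloTree V) (σ : V → C) (x y : V) : Prop :=
  σ x ≠ σ y ∧ ∀ y' : V, σ y' = σ y → T.lca x y ⊆ T.lca x y'

/-- The leaf-colored tree `(T,σ)` explains the vertex-colored digraph `(E,σ)`,
i.e. `(E,σ)` is the best match graph of `(T,σ)`. -/
def Explains (T : PhyloTree V) (σ : V → C) (E : V → V → Prop) : Prop :=
  ∀ x y, E x y ↔ bestMatch T σ x y

/-- `(E,σ)` is a best match graph. -/
def IsBMG (E : V → V → Prop) (σ : V → C) : Prop :=
  ∃ T : PhyloTree V, Explains T σ E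

/-- `(E,σ)` is binary-explainable. -/
def BinaryExplainable (E : V → V → Prop) (σ : V → C) : Prop :=
  ∃ T : PhyloTree V, T.IsBinary ∧ Explains T σ E

/-- The informative triples `R(G,σ)`: `(a,b,b')` encodes `ab|b'`. -/
def informativeTriples (E : V → V → Prop) (σ : V → C) : Set (V × V × V) :=
  {t | σ t.1 ≠ σ t.2.1 ∧ σ t.2.1 = σ t.2.2 ∧ E t.1 t.2.1 ∧ ¬ E t.1 t.2.2}

/-- The forbidden triples `F(G,σ)`: `(a,b,b')` encodes `ab|b'`. -/
def forbiddenTriples (E : V → V → Prop) (σ : V → C) : Set (V × V × V) :=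
  {t | σ t.1 ≠ σ t.2.1 ∧ σ t.2.1 = σ t.2.2 ∧ t.2.1 ≠ t.2.2 ∧ E t.1 t.2.1 ∧ E t.1 t.2.2}

/-- The extended triple set `R^bin(G,σ) = R(G,σ) ∪ {bb'|a : ab|b' ∈ F(G,σ)}`. -/
def Rbin (E : V → V → Prop) (σ : V → C) : Set (V × V × V) :=
  informativeTriples E σ ∪ {t | (t.2.2, t.1, t.2.1) ∈ forbiddenTriples E σ}

/-- Properly colored: arcs only between vertices of distinct colors. -/
def ProperlyColored (E : V → V → Prop) (σ : V → C) : Prop :=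
  ∀ x y, E x y → σ x ≠ σ y

/-- sf-colored: properly colored and every vertex has, for each color (of the graph)
different from its own, at least one out-neighbor of that color. -/
def SfColored (E : V → V → Prop) (σ : V → C) : Prop :=
  ProperlyColored E σ ∧ ∀ x y : V, σ y ≠ σ x → ∃ z, E x z ∧ σ z = σ y

/-- A triple set is consistent if some tree displays all of its triples. -/
def Consistent (R : Set (V × V × V)) : Prop :=
  ∃ T : PhyloTree V, T.DisplaysSet R

/-- The closure `cl(R)`: all triples displayed by every tree displaying `R`. -/
def tripleClosure (R : Set (V × V × V)) : Set (V × V × V) :=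
  {t | ∀ T : PhyloTree V, T.DisplaysSet R → T.Displays t.1 t.2.1 t.2.2}

/-- `(T,σ)` is a least resolved tree for `(E,σ)`: it explains `(E,σ)` and no tree
obtained from it by contracting an edge (i.e. by removing a non-root inner cluster)
explains `(E,σ)`. -/
def IsLRT (T : PhyloTree V) (σ : V → C) (E : V → V → Prop) : Prop :=
  Explains T σ E ∧
    ∀ A ∈ T.clusters, A ≠ Set.univ → 1 < A.ncard →
      ∀ T' : PhyloTree V, T'.clusters = T.clusters \ {A} → ¬ Explains T' σ E

end BMG

section Aho

variable {V : Type*}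

/-- Adjacency in the Aho graph `[R,L]`: `x` and `y` are joined whenever `xy|z ∈ R`
for some `z ∈ L` (only triples with all leaves in `L` are taken into account). -/
def ahoAdj (R : Set (V × V × V)) (L : Set V) (x y : V) : Prop :=
  x ∈ L ∧ y ∈ L ∧ ∃ z ∈ L, (x, y, z) ∈ R ∨ (y, x, z) ∈ R

/-- The vertex set of the connected component of `x` in the Aho graph `[R,L]`. -/
def ahoComponent (R : Set (V × V × V)) (L : Set V) (x : V) : Set V :=
  {y | Relation.ReflTransGen (ahoAdj R L) x y}

/-- The clusters of the Aho tree `Aho(R, V)`: the full leaf set, and recursively the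
connected components of the Aho graphs. -/
inductive IsAhoCluster (R : Set (V × V × V)) : Set V → Prop
  | univ : IsAhoCluster R Set.univ
  | component {L : Set V} {x : V} :
      IsAhoCluster R L → x ∈ L → IsAhoCluster R (ahoComponent R L x)

/-- `T` is the Aho tree (`BUILD` tree) of the triple set `R` on the full leaf set. -/
def IsAhoTree (R : Set (V × V × V)) (T : PhyloTree V) : Prop :=
  T.clusters = {A | IsAhoCluster R A}

/-- The union of the leaf sets of the triples in `R`. -/
def tripleLeaves (R : Set (V × V × V)) : Set V :=
  {v | ∃ t ∈ R, v = t.1 ∨ v = t.2.1 ∨ v = t.2.2}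

end Aho

namespace PhyloTree

variable {V : Type*} (T : PhyloTree V)

theorem subset_or_subset_of_mem {A B : Set V} (hA : A ∈ T.clusters) (hB : B ∈ T.clusters)
    {x : V} (hxA : x ∈ A) (hxB : x ∈ B) : A ⊆ B ∨ B ⊆ A :=
  (T.nested A hA B hB).imp_right
    fun h => h.resolve_right (Set.not_disjoint_iff.mpr ⟨x, hxA, hxB⟩)

theorem lca_comm (x y : V) : T.lca x y = T.lca y x := by
  simp only [lca, and_comm]

theorem lca_subset {A : Set V} (hA : A ∈ T.clusters) {x y : V} (hx : x ∈ A) (hy : y ∈ A) :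
    T.lca x y ⊆ A :=
  Set.sInter_subset_of_mem ⟨hA, hx, hy⟩

variable [Finite V]

theorem lca_spec (x y : V) : T.lca x y ∈ T.clusters ∧ x ∈ T.lca x y ∧ y ∈ T.lca x y := by
  obtain ⟨A, ⟨hA, hxA, hyA⟩, hmin⟩ :=
    (Set.toFinite {A | A ∈ T.clusters ∧ x ∈ A ∧ y ∈ A}).exists_minimal
      ⟨Set.univ, T.univ_mem, trivial, trivial⟩
  have hlca : T.lca x y = A := by
    refine (T.lca_subset hA hxA hyA).antisymm (Set.subset_sInter fun B hB => ?_)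
    obtain ⟨hB, hxB, hyB⟩ := hB
    exact (T.subset_or_subset_of_mem hA hB hxA hxB).elim id (hmin ⟨hB, hxB, hyB⟩)
  exact hlca ▸ ⟨hA, hxA, hyA⟩

theorem lca_mem_clusters (x y : V) : T.lca x y ∈ T.clusters := (T.lca_spec x y).1

theorem mem_lca_left (x y : V) : x ∈ T.lca x y := (T.lca_spec x y).2.1

theorem mem_lca_right (x y : V) : y ∈ T.lca x y := (T.lca_spec x y).2.2

variable {T}

theorem Displays.not_mem_lca {x y z : V} (h : T.Displays x y z) : z ∉ T.lca x y :=
  fun hz => h.2.2.2.1.not_subset (T.lca_subset (T.lca_mem_clusters x y) (T.mem_lca_left x y) hz)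

theorem Displays.mem_iff_of_mem {x y z : V} (h : T.Displays x y z) {P : Set V}
    (hP : P ∈ T.clusters) (hz : z ∈ P) : x ∈ P ↔ y ∈ P := by
  have hsub : T.lca x y ⊆ T.lca x z := h.2.2.2.1.subset
  constructor
  · exact fun hx => T.lca_subset hP hx hz (hsub (T.mem_lca_right x y))
  · intro hy
    rw [h.2.2.2.2] at hsub
    exact T.lca_subset hP hy hz (hsub (T.mem_lca_left x y))

theorem displays_of_lca_ssubset {x y z : V} (hxy : x ≠ y) (hxz : x ≠ z) (hyz : y ≠ z)
    (h : T.lca x y ⊂ T.lca x z) : T.Displays x y z := by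
  refine ⟨hxy, hxz, hyz, h, le_antisymm ?_ ?_⟩
  · rcases T.subset_or_subset_of_mem (T.lca_mem_clusters y z) (T.lca_mem_clusters x y)
      (T.mem_lca_left y z) (T.mem_lca_right x y) with hyz | hxy
    · exact absurd (T.lca_subset (T.lca_mem_clusters x y) (T.mem_lca_left x y)
        (hyz (T.mem_lca_right y z))) h.not_subset
    · exact T.lca_subset (T.lca_mem_clusters y z) (hxy (T.mem_lca_left x y))
        (T.mem_lca_right y z)
  · exact T.lca_subset (T.lca_mem_clusters x z) (h.subset (T.mem_lca_right x y))
      (T.mem_lca_right x z)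

theorem IsBinary.lca_ssubset (hT : T.IsBinary) {x y z : V} (hzx : z ≠ x)
    (h : T.lca z x = T.lca z y) : T.lca x y ⊂ T.lca z x := by
  have hcard : 1 < (T.lca z x).ncard :=
    (Set.one_lt_ncard_iff (Set.toFinite _)).mpr
      ⟨z, x, T.mem_lca_left z x, T.mem_lca_right z x, hzx⟩
  obtain ⟨B, hB, D, hD, hBD, hunion, hBs, hDs⟩ := hT _ (T.lca_mem_clusters z x) hcard
  wlog hzB : z ∈ B generalizing B D
  · have hzD : z ∈ D := (hunion ▸ T.mem_lca_left z x : z ∈ B ∪ D).resolve_left hzB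
    exact this D hD B hB hBD.symm (Set.union_comm D B ▸ hunion) hDs hBs hzD
  have hnotB : ∀ v, T.lca z v = T.lca z x → v ∉ B := fun v hv hvB =>
    hBs.not_subset (hv ▸ T.lca_subset hB hzB hvB)
  have hmemD : ∀ v, T.lca z v = T.lca z x → v ∈ D := fun v hv => by
    have hv' : v ∈ B ∪ D := hunion ▸ hv ▸ T.mem_lca_right z v
    exact hv'.resolve_left (hnotB v hv)
  exact ssubset_of_subset_of_ssubset
    (T.lca_subset hD (hmemD x rfl) (hmemD y h.symm)) hDs

/-- Clusters containing `x` form a chain, so a maximal cluster `A` with `x ∈ A ⊆ C` absorbs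
every `lca u v` along a path from `x`. -/
theorem setOf_reflTransGen_mem_clusters {r : V → V → Prop} {x : V}
    (h : ∀ u v, Relation.ReflTransGen r x u → r u v →
      T.lca u v ⊆ {y | Relation.ReflTransGen r x y}) :
    {y | Relation.ReflTransGen r x y} ∈ T.clusters := by
  set C := {y | Relation.ReflTransGen r x y}
  obtain ⟨A, ⟨hA, hxA, hAC⟩, hmax⟩ :=
    (Set.toFinite {A | A ∈ T.clusters ∧ x ∈ A ∧ A ⊆ C}).exists_maximal
      ⟨{x}, T.singleton_mem x, rfl, Set.singleton_subset_iff.mpr Relation.ReflTransGen.refl⟩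
  suffices hCA : C ⊆ A from hAC.antisymm hCA ▸ hA
  intro y hy
  induction hy with
  | refl => exact hxA
  | @tail u v hu huv ih =>
    have hB := T.lca_mem_clusters u v
    rcases T.subset_or_subset_of_mem hA hB ih (T.mem_lca_left u v) with hAB | hBA
    · exact hmax ⟨hB, hAB hxA, h u v hu huv⟩ hAB (T.mem_lca_right u v)
    · exact hBA (T.mem_lca_right u v)

end PhyloTree

theorem IsAhoCluster.mem_clusters {V : Type*} [Finite V] {R : Set (V × V × V)}
    {T : PhyloTree V}
    (hR : ∀ L ∈ T.clusters, ∀ p q w, (p, q, w) ∈ R → p ∈ L → q ∈ L → w ∈ L →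
      T.lca p q ⊆ ahoComponent R L p)
    {A : Set V} (hA : IsAhoCluster R A) : A ∈ T.clusters := by
  induction hA with
  | univ => exact T.univ_mem
  | @component L x _ _ ih =>
    refine T.setOf_reflTransGen_mem_clusters fun u v hu huv => ?_
    obtain ⟨huL, hvL, w, hwL, h | h⟩ := id huv
    · exact fun z hz => hu.trans (hR L ih u v w h huL hvL hwL hz)
    · rw [T.lca_comm]
      exact fun z hz => (hu.tail huv).trans (hR L ih v u w h hvL huL hwL hz)

section BestMatch

variable {V Γ : Type*} {E : V → V → Prop} {σ : V → Γ} {T : PhyloTree V}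

theorem informative_mem_Rbin {a b b' : V} (hab : σ a ≠ σ b) (hbb' : σ b = σ b') (hEab : E a b)
    (hEab' : ¬E a b') : (a, b, b') ∈ Rbin E σ :=
  Or.inl ⟨hab, hbb', hEab, hEab'⟩

theorem forbidden_mem_Rbin {a b b' : V} (hab : σ a ≠ σ b) (hbb' : σ b = σ b') (hne : b ≠ b')
    (hEab : E a b) (hEab' : E a b') : (b, b', a) ∈ Rbin E σ :=
  Or.inr ⟨hab, hbb', hne, hEab, hEab'⟩

theorem Explains.sfColored [Finite V] (hT : Explains T σ E) : SfColored E σ := by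
  refine ⟨fun x y hxy => ((hT x y).mp hxy).1, fun x y hyx => ?_⟩
  obtain ⟨s, hsc, hmin⟩ :=
    Set.Finite.exists_minimalFor (T.lca x) {s | σ s = σ y} (Set.toFinite _) ⟨y, rfl⟩
  refine ⟨s, (hT x s).mpr ⟨hsc ▸ hyx.symm, fun y' hy' => ?_⟩, hsc⟩
  rcases T.subset_or_subset_of_mem (T.lca_mem_clusters x s) (T.lca_mem_clusters x y')
    (T.mem_lca_left x s) (T.mem_lca_left x y') with h | h
  · exact h
  · exact hmin (hy'.trans hsc) h

theorem Explains.displays_of_mem_informativeTriples [Finite V] (hT : Explains T σ E)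
    {x y z : V} (h : (x, y, z) ∈ informativeTriples E σ) : T.Displays x y z := by
  obtain ⟨hxy, hyz, hExy, hExz⟩ := h
  have hxz : σ x ≠ σ z := hyz ▸ hxy
  obtain ⟨w, hwz, hw⟩ : ∃ w, σ w = σ z ∧ ¬T.lca x z ⊆ T.lca x w := by
    by_contra! h
    exact hExz ((hT x z).mpr ⟨hxz, h⟩)
  have hwx : T.lca x w ⊂ T.lca x z :=
    ((T.subset_or_subset_of_mem (T.lca_mem_clusters x z) (T.lca_mem_clusters x w)
      (T.mem_lca_left x z) (T.mem_lca_left x w)).resolve_left hw).ssubset_of_not_superset hw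
  refine T.displays_of_lca_ssubset (fun h => hxy (congrArg σ h)) (fun h => hxz (congrArg σ h))
    (fun h => hExz (h ▸ hExy)) ?_
  exact ssubset_of_subset_of_ssubset (((hT x y).mp hExy).2 w (hwz.trans hyz.symm)) hwx

theorem Explains.displays_of_mem_forbiddenTriples [Finite V] (hT : Explains T σ E)
    (hbin : T.IsBinary) {x y z : V} (h : (z, x, y) ∈ forbiddenTriples E σ) :
    T.Displays x y z := by
  obtain ⟨hzx, hxy, hxy', hEzx, hEzy⟩ := h
  have hzx' : z ≠ x := fun h => hzx (congrArg σ h)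
  have hzy' : z ≠ y := fun h => hzx (h ▸ hxy.symm)
  have hlca : T.lca z x = T.lca z y :=
    (((hT z x).mp hEzx).2 y hxy.symm).antisymm (((hT z y).mp hEzy).2 x hxy)
  refine T.displays_of_lca_ssubset hxy' hzx'.symm hzy'.symm ?_
  rw [T.lca_comm x z]
  exact hbin.lca_ssubset hzx' hlca

theorem Explains.displaysSet_Rbin [Finite V] (hT : Explains T σ E) (hbin : T.IsBinary) :
    T.DisplaysSet (Rbin E σ) := by
  rintro ⟨x, y, z⟩ (h | h)
  · exact hT.displays_of_mem_informativeTriples h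
  · exact hT.displays_of_mem_forbiddenTriples hbin h

end BestMatch

section AhoRbin

variable {V Γ : Type*} {E : V → V → Prop} {σ : V → Γ} {T : PhyloTree V} {L P : Set V}

/-- For `z ∈ P` of another color, a leaf `w ∈ L` of color `σ q` that is not a best match of `z`
makes `z` adjacent (via `zt|w`) to each best match `t` of `z` of color `σ q`; one of these lies
in `P`, since otherwise `zs|q` would separate `q` from `P`. -/
theorem subset_ahoComponent_Rbin_of_color [Finite V] (hsf : SfColored E σ)
    (hd : T.DisplaysSet (Rbin E σ)) (hP : P ∈ T.clusters) (hPL : P ⊆ L) {p q : V}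
    (hqP : q ∈ P) (hcolor : ∀ y ∈ P, σ y = σ q → y ∈ ahoComponent (Rbin E σ) L p)
    (hnotAll : ∀ z ∈ P, σ z ≠ σ q → ¬∀ y ∈ L, σ y = σ q → E z y) :
    P ⊆ ahoComponent (Rbin E σ) L p := by
  intro z hzP
  by_cases hzq : σ z = σ q
  · exact hcolor z hzP hzq
  obtain ⟨w, hwL, hwq, hzw⟩ : ∃ w ∈ L, σ w = σ q ∧ ¬E z w := by
    by_contra! h
    exact hnotAll z hzP hzq h
  suffices ∃ t ∈ P, σ t = σ q ∧ E z t by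
    obtain ⟨t, htP, htq, hzt⟩ := this
    exact (hcolor t htP htq).tail
      ⟨hPL htP, hPL hzP, w, hwL,
        Or.inr (informative_mem_Rbin (htq ▸ hzq) (htq.trans hwq.symm) hzt hzw)⟩
  obtain ⟨s, hzs, hsq⟩ := hsf.2 z q (Ne.symm hzq)
  by_cases hsP : s ∈ P
  · exact ⟨s, hsP, hsq, hzs⟩
  refine ⟨q, hqP, rfl, by_contra fun hzq' => ?_⟩
  have hdisp : T.Displays z s q := hd _ (informative_mem_Rbin (hsq ▸ hzq) hsq hzs hzq')
  rcases T.subset_or_subset_of_mem hP (T.lca_mem_clusters z s) hzP (T.mem_lca_left z s)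
    with h | h
  · exact hdisp.not_mem_lca (h hqP)
  · exact hsP (h (T.mem_lca_right z s))

theorem lca_subset_ahoComponent_of_mem_informativeTriples [Finite V] (hsf : SfColored E σ)
    (hd : T.DisplaysSet (Rbin E σ)) (hL : L ∈ T.clusters) {p q w : V}
    (ht : (p, q, w) ∈ informativeTriples E σ) (hp : p ∈ L) (hq : q ∈ L) (hw : w ∈ L) :
    T.lca p q ⊆ ahoComponent (Rbin E σ) L p := by
  obtain ⟨hpq, hqw, hEpq, hEpw⟩ := ht
  have hdisp : T.Displays p q w := hd _ (informative_mem_Rbin hpq hqw hEpq hEpw)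
  have hPL : T.lca p q ⊆ L := T.lca_subset hL hp hq
  refine subset_ahoComponent_Rbin_of_color hsf hd (T.lca_mem_clusters p q) hPL
    (T.mem_lca_right p q) (fun y hyP hyq => ?_) (fun z hzP hzq hall => ?_)
  · by_cases hEpy : E p y
    · exact .single ⟨hp, hPL hyP, w, hw,
        Or.inl (informative_mem_Rbin (hyq ▸ hpq) (hyq.trans hqw) hEpy hEpw)⟩
    · exact absurd hyP (hd _ (informative_mem_Rbin hpq hyq.symm hEpq hEpy)).not_mem_lca
  · have hqw' : q ≠ w := fun h => hEpw (h ▸ hEpq)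
    have hdisp' : T.Displays q w z :=
      hd _ (forbidden_mem_Rbin hzq hqw hqw' (hall q hq rfl) (hall w hw hqw.symm))
    exact hdisp.not_mem_lca
      ((hdisp'.mem_iff_of_mem (T.lca_mem_clusters p q) hzP).mp (T.mem_lca_right p q))

theorem lca_subset_ahoComponent_of_mem_forbiddenTriples [Finite V] (hsf : SfColored E σ)
    (hd : T.DisplaysSet (Rbin E σ)) (hL : L ∈ T.clusters) {p q w : V}
    (ht : (w, p, q) ∈ forbiddenTriples E σ) (hp : p ∈ L) (hq : q ∈ L) (hw : w ∈ L) :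
    T.lca p q ⊆ ahoComponent (Rbin E σ) L p := by
  obtain ⟨hwp, hpq, hpq', hEwp, hEwq⟩ := ht
  have hdisp : T.Displays p q w := hd _ (forbidden_mem_Rbin hwp hpq hpq' hEwp hEwq)
  have hPL : T.lca p q ⊆ L := T.lca_subset hL hp hq
  refine subset_ahoComponent_Rbin_of_color hsf hd (T.lca_mem_clusters p q) hPL
    (T.mem_lca_right p q) (fun y hyP hyq => ?_) (fun z hzP hzq hall => ?_)
  · by_cases hEwy : E w y
    · rcases eq_or_ne p y with rfl | hpy
      · exact .refl
      · exact .single ⟨hp, hPL hyP, w, hw,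
          Or.inl (forbidden_mem_Rbin hwp (hpq.trans hyq.symm) hpy hEwp hEwy)⟩
    · have hdisp' : T.Displays w p y :=
        hd _ (informative_mem_Rbin hwp (hpq.trans hyq.symm) hEwp hEwy)
      exact absurd ((hdisp'.mem_iff_of_mem (T.lca_mem_clusters p q) hyP).mpr
        (T.mem_lca_left p q)) hdisp.not_mem_lca
  · have hdisp' : T.Displays p q z :=
      hd _ (forbidden_mem_Rbin (hpq ▸ hzq) hpq hpq' (hall p hp hpq) (hall q hq rfl))
    exact hdisp'.not_mem_lca hzP

theorem IsAhoCluster.mem_clusters_of_displaysSet_Rbin [Finite V] (hsf : SfColored E σ)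
    (hd : T.DisplaysSet (Rbin E σ)) {A : Set V} (hA : IsAhoCluster (Rbin E σ) A) :
    A ∈ T.clusters := by
  refine hA.mem_clusters fun L hL p q w ht hp hq hw => ?_
  rcases ht with ht | ht
  · exact lca_subset_ahoComponent_of_mem_informativeTriples hsf hd hL ht hp hq hw
  · exact lca_subset_ahoComponent_of_mem_forbiddenTriples hsf hd hL ht hp hq hw

end AhoRbin

/-- Theorem: BRT-all-bin-trees.
Let `(G,σ)` be a binary-explainable BMG with vertex set `L` and binary-refinable tree
`(T,σ)` (the Aho tree of `R^bin(G,σ)`). Then every tree on leaf set `L` that displays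
all triples of `R^bin(G,σ)` is a refinement of `(T,σ)`. In particular, every binary
tree that explains `(G,σ)` is a refinement of `(T,σ)`. -/
theorem stmt10 {V Γ : Type*} [Fintype V] (E : V → V → Prop) (σ : V → Γ)
    (hbe : BinaryExplainable E σ)
    (T : PhyloTree V) (hT : IsAhoTree (Rbin E σ) T) :
    (∀ T' : PhyloTree V, T'.DisplaysSet (Rbin E σ) → T'.Refines T) ∧
    (∀ T' : PhyloTree V, T'.IsBinary → Explains T' σ E → T'.Refines T) := by
  obtain ⟨Tb, -, hexp⟩ := hbe
  have hrefines : ∀ T' : PhyloTree V, T'.DisplaysSet (Rbin E σ) → T'.Refines T :=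
    fun T' hd A hA => IsAhoCluster.mem_clusters_of_displaysSet_Rbin hexp.sfColored hd
      (hT ▸ hA : A ∈ {A | IsAhoCluster (Rbin E σ) A})
  exact ⟨hrefines, fun T' hbin hexp' => hrefines T' (hexp'.displaysSet_Rbin hbin)⟩
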